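/- Let U, Ũ ⊆ ℝⁿ be open sets with the closure of U compact and contained in Ũ. Let Ǧ : Ũ × ℝⁿ → ℝ be a smooth family of asymmetric norms and let F : Ũ × ℝⁿ → ℝ be a horizontally C¹ family of asymmetric norms which is strongly convex with respect to Ǧ, and suppose that for each x ∈ Ũ the function α ↦ F_*(x, α)² is differentiable with gradient d_vF_*²(x, α). Then there exists a constant C₃ > 0 such that ‖d_vF_*²(x, α₁) − d_vF_*²(x, α₂)‖ ≤ C₃‖α₁ − α₂‖ for every x ∈ U and all α₁, α₂ ∈ ℝⁿ, where ‖·‖ is the Euclidean norm. -/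

import Mathlib

open scoped RealInnerProductSpace

/-- `ℝⁿ` with the Euclidean inner product. -/
abbrev En (n : ℕ) := EuclideanSpace ℝ (Fin n)

/-- An asymmetric norm on `ℝⁿ`. -/
def IsAsymNorm {n : ℕ} (F : En n → ℝ) : Prop :=
  (∀ y, 0 ≤ F y) ∧ (∀ y, F y = 0 ↔ y = 0) ∧
  (∀ l : ℝ, 0 < l → ∀ y, F (l • y) = l * F y) ∧
  (∀ y₁ y₂, F (y₁ + y₂) ≤ F y₁ + F y₂)

/-- A horizontally `C¹` family of asymmetric norms on `Ut × ℝⁿ`: `F` is continuous,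
each `F x` is an asymmetric norm, and the partial derivative of `F` with respect to
the (horizontal) variable `x` exists everywhere and is continuous. -/
def HorizC1Family {n : ℕ} (Ut : Set (En n)) (F : En n → En n → ℝ) : Prop :=
  ContinuousOn (fun p : En n × En n => F p.1 p.2) (Ut ×ˢ Set.univ) ∧
  (∀ x ∈ Ut, IsAsymNorm (F x)) ∧
  ∃ DF : En n × En n → (En n →L[ℝ] ℝ),
    (∀ x ∈ Ut, ∀ y, HasFDerivAt (fun x' => F x' y) (DF (x, y)) x) ∧
    ContinuousOn DF (Ut ×ˢ Set.univ)

/-- The family of dual asymmetric norms `F_*(x, α) = sup {⟨α, y⟩ : F x y ≤ 1}`. -/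
noncomputable def dualNormF {n : ℕ} (F : En n → En n → ℝ) (x α : En n) : ℝ :=
  sSup ((fun y => ⟪α, y⟫) '' {y | F x y ≤ 1})

/-- A smooth family of asymmetric norms: each `G x` is an asymmetric norm and
`G` is `C^∞` on `Ut × (ℝⁿ \ {0})`. -/
def SmoothFamily {n : ℕ} (Ut : Set (En n)) (G : En n → En n → ℝ) : Prop :=
  (∀ x ∈ Ut, IsAsymNorm (G x)) ∧
  ContDiffOn ℝ (⊤ : ℕ∞) (fun p : En n × En n => G p.1 p.2) (Ut ×ˢ {y : En n | y ≠ 0})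

/-- The subdifferential of `F(x,·)²` at `y`. -/
def subdiffSqF {n : ℕ} (F : En n → En n → ℝ) (x y : En n) : Set (En n) :=
  {α | ∀ z, (F x y) ^ 2 + ⟪α, z - y⟫ ≤ (F x z) ^ 2}

/-- The family `F` is strongly convex with respect to the family `G` on `Ut`. -/
def StronglyConvexFamilyWrt {n : ℕ} (Ut : Set (En n)) (F G : En n → En n → ℝ) : Prop :=
  ∀ x ∈ Ut, ∀ y z α, α ∈ subdiffSqF F x y →
    (F x y) ^ 2 + ⟪α, z - y⟫ + (G x (z - y)) ^ 2 ≤ (F x z) ^ 2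

/-- A family of asymmetric norms, continuous off the zero section, admits a uniform
positive lower bound `m‖y‖ ≤ N x y` over a compact set of base points. -/
lemma family_lower {n : ℕ} (hn : 0 < n) {K Ut : Set (En n)} (hK : IsCompact K)
    (hKne : K.Nonempty) (hKU : K ⊆ Ut)
    {N : En n → En n → ℝ} (hN : ∀ x ∈ Ut, IsAsymNorm (N x))
    (hc : ContinuousOn (fun p : En n × En n => N p.1 p.2) (Ut ×ˢ {y : En n | y ≠ 0})) :
    ∃ m > (0:ℝ), ∀ x ∈ K, ∀ y, m * ‖y‖ ≤ N x y := by
  have hsne : (Metric.sphere (0 : En n) 1).Nonempty := by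
    refine ⟨EuclideanSpace.single ⟨0, hn⟩ 1, ?_⟩
    simp [EuclideanSpace.norm_single]
  have hKs : IsCompact (K ×ˢ Metric.sphere (0 : En n) 1) :=
    hK.prod (isCompact_sphere 0 1)
  have hsub' : K ×ˢ Metric.sphere (0 : En n) 1 ⊆ Ut ×ˢ {y : En n | y ≠ 0} := by
    rintro ⟨x, u⟩ ⟨hx, hu⟩
    refine ⟨hKU hx, ?_⟩
    simp only [Set.mem_setOf_eq]
    intro h0
    rw [Metric.mem_sphere, h0] at hu
    simp at hu
  obtain ⟨⟨x₀, u₀⟩, hmem, hmin⟩ := hKs.exists_isMinOn (hKne.prod hsne) (hc.mono hsub')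
  have hu₀ : ‖u₀‖ = 1 := by simpa using hmem.2
  have hx₀ : x₀ ∈ Ut := hKU hmem.1
  have hN₀ := hN x₀ hx₀
  have hm : 0 < N x₀ u₀ := by
    rcases lt_or_eq_of_le (hN₀.1 u₀) with h | h
    · exact h
    · exfalso
      have : u₀ = 0 := (hN₀.2.1 u₀).mp h.symm
      rw [this] at hu₀; simp at hu₀
  refine ⟨N x₀ u₀, hm, fun x hx y => ?_⟩
  rcases eq_or_ne y 0 with rfl | hy
  · simp [(hN x (hKU hx)).2.1 0 |>.mpr rfl]
  · have hny : (0:ℝ) < ‖y‖ := norm_pos_iff.mpr hy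
    set u : En n := ‖y‖⁻¹ • y with hu
    have hus : u ∈ Metric.sphere (0 : En n) 1 := by
      simp [hu, norm_smul, abs_of_pos (inv_pos.mpr hny), inv_mul_cancel₀ hny.ne']
    have hle : N x₀ u₀ ≤ N x u := hmin (Set.mk_mem_prod hx hus)
    have hyu : y = ‖y‖ • u := by
      rw [hu, smul_smul, mul_inv_cancel₀ hny.ne', one_smul]
    have := (hN x (hKU hx)).2.2.1 ‖y‖ hny u
    rw [← hyu] at this
    rw [this, mul_comm]
    exact mul_le_mul_of_nonneg_left hle hny.le

/-- A continuous function with quadratic growth admits a global minimizer for its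
tilted version `f - ⟪α, ·⟫`. -/
lemma exists_min {n : ℕ} (f : En n → ℝ) (hf : Continuous f) (m : ℝ) (hm : 0 < m)
    (hf0 : f 0 = 0) (hlow : ∀ y, m * ‖y‖^2 ≤ f y) (α : En n) :
    ∃ y, ∀ z, f y - ⟪α, y⟫ ≤ f z - ⟪α, z⟫ := by
  set R : ℝ := ‖α‖ / m + 1 with hR
  have hR0 : 0 < R := by positivity
  have hψ : Continuous fun y : En n => f y - ⟪α, y⟫ :=
    hf.sub (continuous_const.inner continuous_id)
  obtain ⟨y₀, hy₀mem, hy₀⟩ := (isCompact_closedBall (0 : En n) R).exists_isMinOn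
    ⟨0, Metric.mem_closedBall_self hR0.le⟩ hψ.continuousOn
  refine ⟨y₀, fun z => ?_⟩
  by_cases hz : z ∈ Metric.closedBall (0 : En n) R
  · exact hy₀ hz
  · have hz' : R < ‖z‖ := by
      simpa [Metric.mem_closedBall, dist_zero_right, not_le] using hz
    have h0 : f y₀ - ⟪α, y₀⟫ ≤ 0 := by
      have := hy₀ (Metric.mem_closedBall_self hR0.le)
      simpa [hf0] using this
    have h1 : ⟪α, z⟫ ≤ ‖α‖ * ‖z‖ := real_inner_le_norm α z
    have h2 := hlow z
    have h3 : ‖α‖ ≤ m * (R - 1) := by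
      rw [hR]; field_simp; linarith
    nlinarith [norm_nonneg α, norm_nonneg z, hz'.le, mul_pos hm (hR0.trans hz')]

set_option maxHeartbeats 1000000 in
/-- Vertical Lipschitz estimate for the fiberwise gradient of the squared dual norm
of a strongly convex horizontally `C¹` family of asymmetric norms. -/
theorem grad_dual_sq_vertical_lipschitz {n : ℕ} (U Ut : Set (En n))
    (hU : IsOpen U) (hUt : IsOpen Ut)
    (hcomp : IsCompact (closure U)) (hsub : closure U ⊆ Ut)
    (G : En n → En n → ℝ) (hG : SmoothFamily Ut G)
    (F : En n → En n → ℝ) (hF : HorizC1Family Ut F)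
    (hsc : StronglyConvexFamilyWrt Ut F G)
    (g : En n → En n → En n)
    (hg : ∀ x ∈ Ut, ∀ α, HasGradientAt (fun β => (dualNormF F x β) ^ 2) (g x α) α) :
    ∃ C₃ > (0 : ℝ), ∀ x ∈ U, ∀ α₁ α₂ : En n,
      ‖g x α₁ - g x α₂‖ ≤ C₃ * ‖α₁ - α₂‖ := by
  rcases Nat.eq_zero_or_pos n with hn | hn
  · subst hn
    refine ⟨1, one_pos, fun x hx α₁ α₂ => ?_⟩
    have hα : α₁ = α₂ := by
      ext i; exact absurd i.2 (by simp)
    rw [hα, sub_self, norm_zero]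
    positivity
  rcases U.eq_empty_or_nonempty with rfl | hUne
  · exact ⟨1, one_pos, fun x hx => absurd hx (Set.notMem_empty x)⟩
  have hclne : (closure U).Nonempty := hUne.closure
  obtain ⟨m, hm, hmF⟩ := family_lower hn hcomp hclne hsub hF.2.1
    (hF.1.mono (fun p hp => ⟨hp.1, trivial⟩))
  obtain ⟨c, hc, hcG⟩ := family_lower hn hcomp hclne hsub hG.1 hG.2.continuousOn
  refine ⟨2 / c ^ 2, by positivity, fun x hx α₁ α₂ => ?_⟩
  have hxcl : x ∈ closure U := subset_closure hx
  have hxt : x ∈ Ut := hsub hxcl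
  have hFx := hF.2.1 x hxt
  -- continuity of `F x`
  have hFc : Continuous fun y => F x y := by
    rw [continuous_iff_continuousAt]
    intro y
    have hopen : IsOpen (Ut ×ˢ (Set.univ : Set (En n))) := hUt.prod isOpen_univ
    have h1 : ContinuousAt (fun p : En n × En n => F p.1 p.2) (x, y) :=
      hF.1.continuousAt (hopen.mem_nhds ⟨hxt, trivial⟩)
    exact h1.comp (Continuous.prodMk_right x).continuousAt
  set f : En n → ℝ := fun y => (F x y) ^ 2 with hfdef
  have hf0 : f 0 = 0 := by simp [hfdef, (hFx.2.1 0).mpr rfl]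
  have hflow : ∀ y, m ^ 2 * ‖y‖ ^ 2 ≤ f y := by
    intro y
    have h1 := hmF x hxcl y
    have h2 := hFx.1 y
    have h3 : (0:ℝ) ≤ m * ‖y‖ := mul_nonneg hm.le (norm_nonneg y)
    simp only [hfdef]
    nlinarith
  have hfc : Continuous f := hFc.pow 2
  -- minimizers of the tilted functionals
  have hminY : ∀ α : En n, ∃ y, ∀ z, f y - ⟪α, y⟫ ≤ f z - ⟪α, z⟫ :=
    exists_min f hfc (m ^ 2) (by positivity) hf0 hflow
  choose Y hY using hminY
  -- the minimizer is a subgradient point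
  have hmem_sub : ∀ α : En n, α ∈ subdiffSqF F x (Y α) := by
    intro α z
    have := hY α z
    rw [inner_sub_right]
    simp only [hfdef] at this ⊢
    linarith
  -- facts about the dual norm
  set s : En n → ℝ := fun β => dualNormF F x β with hsdef
  have h0mem : (0 : En n) ∈ {y | F x y ≤ 1} := by
    simp [(hFx.2.1 0).mpr rfl]
  have hSne : ∀ β : En n, ((fun y => ⟪β, y⟫) '' {y | F x y ≤ 1}).Nonempty :=
    fun β => ⟨⟪β, (0:En n)⟫, 0, h0mem, rfl⟩
  have hSbdd : ∀ β : En n, BddAbove ((fun y => ⟪β, y⟫) '' {y | F x y ≤ 1}) := by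
    intro β
    refine ⟨‖β‖ / m, ?_⟩
    rintro t ⟨y, hy, rfl⟩
    have h1 : ⟪β, y⟫ ≤ ‖β‖ * ‖y‖ := real_inner_le_norm β y
    have h2 := hmF x hxcl y
    have h3 : m * ‖y‖ ≤ 1 := h2.trans hy
    rw [le_div_iff₀ hm]
    nlinarith [norm_nonneg β, norm_nonneg y]
  have hs0 : ∀ β : En n, 0 ≤ s β := by
    intro β
    have : (0:ℝ) ∈ (fun y => ⟪β, y⟫) '' {y | F x y ≤ 1} :=
      ⟨0, h0mem, inner_zero_right β⟩
    exact le_csSup (hSbdd β) this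
  have hpair : ∀ β y : En n, ⟪β, y⟫ ≤ s β * F x y := by
    intro β y
    rcases eq_or_lt_of_le (hFx.1 y) with h | h
    · have hy0 : y = 0 := (hFx.2.1 y).mp h.symm
      have hF0 : F x 0 = 0 := (hFx.2.1 0).mpr rfl
      rw [hy0, hF0, mul_zero, inner_zero_right]
    · set z : En n := (F x y)⁻¹ • y with hz
      have hFz : F x z = 1 := by
        rw [hz, hFx.2.2.1 _ (inv_pos.mpr h), inv_mul_cancel₀ h.ne']
      have hmem : ⟪β, z⟫ ∈ (fun y => ⟪β, y⟫) '' {y | F x y ≤ 1} :=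
        ⟨z, by simp [hFz], rfl⟩
      have hle : ⟪β, z⟫ ≤ s β := le_csSup (hSbdd β) hmem
      rw [hz, real_inner_smul_right] at hle
      have := mul_le_mul_of_nonneg_left hle h.le
      rw [← mul_assoc, mul_inv_cancel₀ h.ne', one_mul] at this
      linarith [mul_comm (F x y) (s β) ▸ this]
  have hA1 : ∀ β y : En n, ⟪β, y⟫ - f y ≤ (s β) ^ 2 / 4 := by
    intro β y
    have h1 := hpair β y
    simp only [hfdef]
    nlinarith [sq_nonneg (s β - 2 * F x y)]
  have hA2 : ∀ α : En n, (s α) ^ 2 / 4 ≤ ⟪α, Y α⟫ - f (Y α) := by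
    intro α
    set M : ℝ := ⟪α, Y α⟫ - f (Y α) with hM
    have hMmax : ∀ z, ⟪α, z⟫ - f z ≤ M := by
      intro z; have := hY α z; simp only [hM]; linarith
    have hM0 : 0 ≤ M := by
      have := hMmax 0
      simpa [hf0] using this
    rcases eq_or_lt_of_le (hs0 α) with h | h
    · rw [← h]; simpa using hM0
    · have hub : ∀ t ∈ (fun y => ⟪α, y⟫) '' {y | F x y ≤ 1},
          t ≤ (2 * M + (s α) ^ 2 / 2) / s α := by
        rintro t ⟨y, hy, rfl⟩
        set y' : En n := (s α / 2) • y with hy'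
        have hiy : ⟪α, y'⟫ = s α / 2 * ⟪α, y⟫ := real_inner_smul_right α y (s α / 2)
        have hFy' : F x y' = s α / 2 * F x y :=
          hFx.2.2.1 (s α / 2) (by linarith) y
        have hfy' : f y' ≤ (s α / 2) ^ 2 := by
          simp only [hfdef, hFy']
          have h1 := hFx.1 y
          have h2 : F x y ≤ 1 := hy
          have ht2 : F x y ^ 2 ≤ 1 := by nlinarith
          nlinarith [sq_nonneg (s α / 2)]
        have := hMmax y'
        rw [hiy] at this
        rw [le_div_iff₀ h]
        nlinarith
      have hssub : s α ≤ (2 * M + (s α) ^ 2 / 2) / s α :=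
        csSup_le (hSne α) hub
      rw [le_div_iff₀ h] at hssub
      nlinarith
  -- identification of the gradient with 4 times the minimizer
  have hgY : ∀ α : En n, Y α = (4:ℝ)⁻¹ • g x α := by
    intro α
    have hgF : HasFDerivAt (fun β => (dualNormF F x β) ^ 2)
        (InnerProductSpace.toDual ℝ (En n) (g x α)) α := (hg x hxt α).hasFDerivAt
    set L : En n → ℝ := fun β => (4:ℝ)⁻¹ • (dualNormF F x β) ^ 2 - ⟪Y α, β⟫ + f (Y α)
      with hLdef
    have hD : HasFDerivAt L
        ((4:ℝ)⁻¹ • InnerProductSpace.toDual ℝ (En n) (g x α) - innerSL ℝ (Y α)) α := by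
      exact ((hgF.const_smul ((4:ℝ)⁻¹)).sub (innerSL ℝ (Y α)).hasFDerivAt).add_const
        (f (Y α))
    have hglob : ∀ β, L α ≤ L β := by
      intro β
      have h1 : L β = (s β) ^ 2 / 4 - ⟪β, Y α⟫ + f (Y α) := by
        simp only [hLdef, hsdef, smul_eq_mul]
        rw [real_inner_comm]
        ring
      have h2 : L α = (s α) ^ 2 / 4 - ⟪α, Y α⟫ + f (Y α) := by
        simp only [hLdef, hsdef, smul_eq_mul]
        rw [real_inner_comm]
        ring
      have h3 := hA1 β (Y α)
      have h4 := hA2 α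
      rw [h1, h2]
      linarith
    have hlm : IsLocalMin L α := Filter.Eventually.of_forall hglob
    have hD0 := hlm.hasFDerivAt_eq_zero hD
    have hev : ∀ w : En n, (4:ℝ)⁻¹ * ⟪g x α, w⟫ - ⟪Y α, w⟫ = 0 := by
      intro w
      have := ContinuousLinearMap.ext_iff.mp hD0 w
      simpa [ContinuousLinearMap.sub_apply, ContinuousLinearMap.smul_apply,
        InnerProductSpace.toDual_apply_apply, innerSL_apply_apply, smul_eq_mul] using this
    set w : En n := (4:ℝ)⁻¹ • g x α - Y α with hw
    have hww : ⟪w, w⟫ = 0 := by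
      rw [hw, inner_sub_left, real_inner_smul_left]
      have := hev ((4:ℝ)⁻¹ • g x α - Y α)
      linarith
    have hw0 : w = 0 := inner_self_eq_zero.mp hww
    rw [hw, sub_eq_zero] at hw0
    exact hw0.symm
  -- strong monotonicity and conclusion
  have h₁ := hsc x hxt (Y α₁) (Y α₂) α₁ (hmem_sub α₁)
  have h₂ := hsc x hxt (Y α₂) (Y α₁) α₂ (hmem_sub α₂)
  have hG1 : c * ‖Y α₂ - Y α₁‖ ≤ G x (Y α₂ - Y α₁) := hcG x hxcl _
  have hG2 : c * ‖Y α₁ - Y α₂‖ ≤ G x (Y α₁ - Y α₂) := hcG x hxcl _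
  have hGn1 : 0 ≤ G x (Y α₂ - Y α₁) := (hG.1 x hxt).1 _
  have hGn2 : 0 ≤ G x (Y α₁ - Y α₂) := (hG.1 x hxt).1 _
  have hCS : ⟪α₁ - α₂, Y α₁ - Y α₂⟫ ≤ ‖α₁ - α₂‖ * ‖Y α₁ - Y α₂‖ :=
    real_inner_le_norm _ _
  have hnrev : ‖Y α₂ - Y α₁‖ = ‖Y α₁ - Y α₂‖ := norm_sub_rev _ _
  have hwn : (0:ℝ) ≤ ‖Y α₁ - Y α₂‖ := norm_nonneg _
  have hcw : (0:ℝ) ≤ c * ‖Y α₁ - Y α₂‖ := mul_nonneg hc.le hwn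
  have hmono : 2 * c ^ 2 * ‖Y α₁ - Y α₂‖ ^ 2 ≤ ‖α₁ - α₂‖ * ‖Y α₁ - Y α₂‖ := by
    simp only [inner_sub_left, inner_sub_right] at h₁ h₂ hCS
    rw [hnrev] at hG1
    nlinarith
  have key : 2 * c ^ 2 * ‖Y α₁ - Y α₂‖ ≤ ‖α₁ - α₂‖ := by
    rcases eq_or_lt_of_le hwn with h | h
    · rw [← h, mul_zero]
      exact norm_nonneg _
    · have h2 : (2 * c ^ 2 * ‖Y α₁ - Y α₂‖) * ‖Y α₁ - Y α₂‖ ≤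
          ‖α₁ - α₂‖ * ‖Y α₁ - Y α₂‖ := by
        rw [mul_assoc, ← pow_two]
        exact hmono
      exact le_of_mul_le_mul_right h2 h
  have hg4 : g x α₁ - g x α₂ = (4:ℝ) • (Y α₁ - Y α₂) := by
    rw [hgY α₁, hgY α₂, smul_sub, smul_smul, smul_smul]
    norm_num
  rw [hg4, norm_smul]
  simp only [Real.norm_ofNat]
  have heq : 2 / c ^ 2 * (2 * c ^ 2 * ‖Y α₁ - Y α₂‖) = 4 * ‖Y α₁ - Y α₂‖ := by
    field_simp [hc.ne']
    ring
  calc 4 * ‖Y α₁ - Y α₂‖ = 2 / c ^ 2 * (2 * c ^ 2 * ‖Y α₁ - Y α₂‖) := heq.symm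
    _ ≤ 2 / c ^ 2 * ‖α₁ - α₂‖ := by
        exact mul_le_mul_of_nonneg_left key (by positivity)
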